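/- Consider two agents with additive valuations and partition-matroid constraints with the same categories but possibly different capacities. The RR-squared algorithm — where agents alternately pick the remaining category maximizing their own first-picker surplus and the picker goes first in Capped Round Robin within that category — produces an F-EF1 allocation; in particular the agent who picks the first category has no feasible envy at all. -/

import Mathlib

/-- The best unallocated item for a picker with valuation `w`: an item of `L` of
maximum value (ties broken by the linear order on items). -/
noncomputable def bestItem {α : Type*} [DecidableEq α] [LinearOrder α] [Inhabited α]
    (w : α → ℕ) (L : Finset α) : α :=
  if h : (L.filter (fun g => ∀ g' ∈ L, w g' ≤ w g)).Nonempty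
  then (L.filter (fun g => ∀ g' ∈ L, w g' ≤ w g)).min' h
  else default

/-- Capped Round Robin: in turn `t`, agent `σ t` picks her best remaining item unless
she has reached her capacity, in which case she is skipped; the process runs until the
pool `L` is exhausted (the `fuel` parameter only ensures termination and is taken large
enough that it never runs out). -/
noncomputable def crr {α : Type*} [DecidableEq α] [LinearOrder α] [Inhabited α] {n : ℕ}
    (k : Fin n → ℕ) (v : Fin n → α → ℕ) (σ : ℕ → Fin n) :
    ℕ → ℕ → Finset α → (Fin n → Finset α) → Fin n → Finset α
  | 0, _, _, X => X
  | fuel + 1, t, L, X =>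
    if L.Nonempty then
      if (X (σ t)).card < k (σ t) then
        crr k v σ fuel (t + 1) (L.erase (bestItem (v (σ t)) L))
          (Function.update X (σ t) (insert (bestItem (v (σ t)) L) (X (σ t))))
      else crr k v σ fuel (t + 1) L X
    else X

/-- Capped Round Robin for two agents on a single category: agent `l` picks first,
then the agents alternate; agent `i` picks using her valuation `v i`, subject to her
capacity `k i`. -/
noncomputable def crr2 {α : Type*} [DecidableEq α] [LinearOrder α] [Inhabited α]
    (k : Fin 2 → ℕ) (v : Fin 2 → α → ℕ) (l : Fin 2) (M : Finset α) :
    Fin 2 → Finset α :=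
  crr k v (fun t => if t % 2 = 0 then l else l + 1) (2 * (M.card + 1)) 0 M (fun _ => ∅)

/-- Feasible value of a bundle `T` under value function `v` and capacity `c`:
the maximum value of a subset of `T` of size at most `c`. -/
noncomputable def feasVal {α : Type*} [DecidableEq α] (v : α → ℕ) (c : ℕ)
    (T : Finset α) : ℕ :=
  ((T.powerset.filter (fun S => S.card ≤ c)).image (fun S => S.sum v)).sup id

/-- First-picker surplus of agent `a` in category `h`: her feasible value of her own
share minus her feasible value of the other's share, in the Capped Round Robin outcome
on category `C h` where `a` picks first. -/
noncomputable def catSurplus {α : Type*} [DecidableEq α] [LinearOrder α] [Inhabited α]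
    {l : ℕ} (k : Fin 2 → Fin l → ℕ) (v : Fin 2 → α → ℕ) (C : Fin l → Finset α)
    (a : Fin 2) (h : Fin l) : ℤ :=
  ((feasVal (v a) (k a h) (crr2 (fun i => k i h) v a (C h) a) : ℕ) : ℤ) -
    ((feasVal (v a) (k a h) (crr2 (fun i => k i h) v a (C h) (a + 1)) : ℕ) : ℤ)

/-- The remaining category maximizing `f` (ties broken by the order on `Fin l`). -/
noncomputable def bestCat {l : ℕ} [NeZero l] (f : Fin l → ℤ)
    (rem : Finset (Fin l)) : Fin l :=
  if h : (rem.filter (fun c => ∀ c' ∈ rem, f c' ≤ f c)).Nonempty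
  then (rem.filter (fun c => ∀ c' ∈ rem, f c' ≤ f c)).min' h
  else default

/-- The RR-squared algorithm: while categories remain, the current agent `a` picks the
remaining category maximizing her own first-picker surplus, the category is allocated by
Capped Round Robin with `a` picking first, and the turn passes to the other agent. -/
noncomputable def rr2run {α : Type*} [DecidableEq α] [LinearOrder α] [Inhabited α]
    {l : ℕ} [NeZero l] (k : Fin 2 → Fin l → ℕ) (v : Fin 2 → α → ℕ)
    (C : Fin l → Finset α) :
    ℕ → Finset (Fin l) → Fin 2 → (Fin 2 → Finset α) → Fin 2 → Finset α
  | 0, _, _, X => X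
  | fuel + 1, rem, a, X =>
    if rem.Nonempty then
      rr2run k v C fuel (rem.erase (bestCat (catSurplus k v C a) rem)) (a + 1)
        (fun i => X i ∪
          crr2 (fun t => k t (bestCat (catSurplus k v C a) rem)) v a
            (C (bestCat (catSurplus k v C a) rem)) i)
    else X

/-- Feasible value of bundle `T` for an agent with per-category capacities `kc` under a
partition matroid with categories `C`. -/
noncomputable def pFeasVal {α : Type*} [DecidableEq α] {l : ℕ} (v : α → ℕ)
    (kc : Fin l → ℕ) (C : Fin l → Finset α) (T : Finset α) : ℕ :=
  ((T.powerset.filter (fun S => ∀ h, (S ∩ C h).card ≤ kc h)).image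
    (fun S => S.sum v)).sup id

/-!
Everything is measured through threshold counts: for `c : ℕ`, how many items of a bundle an
agent values at least `c`. A sum of values is the sum over thresholds of these counts, and a
feasible value (best `d` items) is at most the sum of the counts capped at `d`; so comparing
capped counts at every threshold compares feasible values with sums.

In two-agent Capped Round Robin on one category, each opponent turn removes at most one item
above a threshold, so the first mover collects half of those items rounded up (the second
mover half rounded down, both capped by capacity), while the greedy answers of an agent bound
how many such items can land in the other share. Comparing these counts gives: the first picker
is envy-free, the second picker is envy-free up to one item, and going second in a category
costs an agent at most her first-picker surplus there.

Across categories the agent who chooses gains her surplus on the chosen category, which is at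
least the surplus she can lose on the next category, chosen by the other agent. Telescoping,
each agent's total feasible advantage over the categories still to be chosen is nonnegative
when she chooses next. For the agent choosing second only the first category needs care, and
there removing one item of the first picker's share suffices.
-/

open Finset

section FeasibleValue

variable {α : Type*}

def countAtLeast (w : α → ℕ) (c : ℕ) (T : Finset α) : ℕ := #{x ∈ T | c ≤ w x}

lemma countAtLeast_mono {w : α → ℕ} {c : ℕ} {S T : Finset α} (h : S ⊆ T) :
    countAtLeast w c S ≤ countAtLeast w c T :=
  card_le_card (filter_subset_filter _ h)

lemma countAtLeast_le_card (w : α → ℕ) (c : ℕ) (T : Finset α) : countAtLeast w c T ≤ #T :=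
  card_filter_le _ _

lemma countAtLeast_insert [DecidableEq α] (w : α → ℕ) (c : ℕ) {g : α} {T : Finset α}
    (hg : g ∉ T) :
    countAtLeast w c (insert g T) = countAtLeast w c T + if c ≤ w g then 1 else 0 := by
  unfold countAtLeast
  rw [filter_insert]
  split_ifs <;> simp [card_insert_of_notMem, hg]

lemma countAtLeast_erase [DecidableEq α] (w : α → ℕ) (c : ℕ) {g : α} {T : Finset α}
    (hg : g ∈ T) :
    countAtLeast w c T = countAtLeast w c (T.erase g) + if c ≤ w g then 1 else 0 := by
  rw [← countAtLeast_insert w c (notMem_erase g T), insert_erase hg]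

lemma countAtLeast_eq_zero_of_isMax {w : α → ℕ} {c : ℕ} {g : α} {T : Finset α}
    (hg : ∀ x ∈ T, w x ≤ w g) (hc : w g < c) : countAtLeast w c T = 0 := by
  simpa [countAtLeast, filter_eq_empty_iff] using fun x hx => (hg x hx).trans_lt hc

lemma exists_countAtLeast_sdiff_eq [DecidableEq α] (w : α → ℕ) (T : Finset α) :
    ∃ Y ⊆ T, #Y ≤ 1 ∧ ∀ c, countAtLeast w c (T \ Y) = countAtLeast w c T - 1 := by
  rcases T.eq_empty_or_nonempty with rfl | hT
  · exact ⟨∅, subset_rfl, by simp, fun c => by simp [countAtLeast]⟩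
  obtain ⟨y, hy, hmax⟩ := exists_max_image T w hT
  refine ⟨{y}, singleton_subset_iff.mpr hy, (card_singleton y).le, fun c => ?_⟩
  rw [← erase_eq, countAtLeast_erase w c hy]
  split_ifs with hc
  · omega
  · have := countAtLeast_eq_zero_of_isMax hmax (not_le.mp hc)
    rw [countAtLeast_erase w c hy, if_neg hc] at this
    omega

lemma sum_eq_sum_countAtLeast (w : α → ℕ) {T : Finset α} {B : ℕ}
    (hB : ∀ x ∈ T, w x ≤ B) :
    T.sum w = ∑ c ∈ range B, countAtLeast w (c + 1) T := by
  simp only [countAtLeast, card_filter]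
  rw [sum_comm]
  refine sum_congr rfl fun x hx => ?_
  rw [← card_filter, show {c ∈ range B | c + 1 ≤ w x} = range (w x) by
    ext c; simp only [mem_filter, mem_range]; have := hB x hx; omega, card_range]

variable [DecidableEq α]

lemma le_feasVal {v : α → ℕ} {c : ℕ} {S T : Finset α} (hST : S ⊆ T) (hc : #S ≤ c) :
    S.sum v ≤ feasVal v c T :=
  le_sup (f := id) (mem_image_of_mem _ (by simp [hST, hc]))

lemma feasVal_le {v : α → ℕ} {c n : ℕ} {T : Finset α}
    (h : ∀ S ⊆ T, #S ≤ c → S.sum v ≤ n) : feasVal v c T ≤ n := by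
  simpa [feasVal] using fun S hS hc => h S hS hc

lemma feasVal_eq_sum {v : α → ℕ} {c : ℕ} {T : Finset α} (h : #T ≤ c) :
    feasVal v c T = T.sum v :=
  le_antisymm (feasVal_le fun _ hS _ => sum_le_sum_of_subset hS) (le_feasVal subset_rfl h)

lemma feasVal_mono {v : α → ℕ} {c : ℕ} {S T : Finset α} (h : S ⊆ T) :
    feasVal v c S ≤ feasVal v c T :=
  feasVal_le fun _ h' hc => le_feasVal (h'.trans h) hc

/-- Layer cake: a sum of values is the sum over thresholds `c` of the number of items worth at
least `c`, and at most `d` of them can come from a set of size `d`. -/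
lemma feasVal_le_sum_of_countAtLeast {w : α → ℕ} {d : ℕ} {S T : Finset α}
    (h : ∀ c, min d (countAtLeast w c T) ≤ countAtLeast w c S) : feasVal w d T ≤ S.sum w := by
  refine feasVal_le fun U hU hd => ?_
  have hB : ∀ x ∈ U ∪ S, w x ≤ (U ∪ S).sup w := fun x hx => le_sup hx
  rw [sum_eq_sum_countAtLeast w fun x hx => hB x (mem_union_left S hx),
    sum_eq_sum_countAtLeast w fun x hx => hB x (mem_union_right U hx)]
  refine sum_le_sum fun c _ => (le_min ?_ (countAtLeast_mono hU)).trans (h (c + 1))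
  exact (countAtLeast_le_card _ _ _).trans hd

noncomputable def feasAdv (w : α → ℕ) (c : ℕ) (own other : Finset α) : ℤ :=
  ((own.sum w : ℕ) : ℤ) - feasVal w c other

lemma feasAdv_anti {w : α → ℕ} {c : ℕ} (own : Finset α) {S T : Finset α} (h : S ⊆ T) :
    feasAdv w c own T ≤ feasAdv w c own S := by
  have : feasVal w c S ≤ feasVal w c T := feasVal_mono h
  unfold feasAdv
  omega

end FeasibleValue

section CappedRoundRobin

variable {α : Type*} [DecidableEq α] [LinearOrder α] [Inhabited α]

lemma bestItem_spec {w : α → ℕ} {L : Finset α} (hL : L.Nonempty) :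
    bestItem w L ∈ L ∧ ∀ x ∈ L, w x ≤ w (bestItem w L) := by
  obtain ⟨b, hb, hmax⟩ := exists_max_image L w hL
  have hne : {g ∈ L | ∀ x ∈ L, w x ≤ w g}.Nonempty := ⟨b, mem_filter.mpr ⟨hb, hmax⟩⟩
  rw [bestItem, dif_pos hne]
  exact mem_filter.mp (min'_mem _ hne)

variable {n : ℕ} (v : Fin n → α → ℕ) (σ : ℕ → Fin n)

lemma crr_empty_pool (k : Fin n → ℕ) (f t : ℕ) (X : Fin n → Finset α) :
    crr k v σ f t ∅ X = X := by
  cases f <;> simp [crr]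

lemma crr_subset_union (k : Fin n → ℕ) (f : ℕ) :
    ∀ t L X a, crr k v σ f t L X a ⊆ X a ∪ L := by
  induction f with
  | zero => intro t L X a; exact subset_union_left
  | succ f ih =>
    intro t L X a
    simp only [crr]
    split_ifs with hL
    · refine (ih _ _ _ a).trans (union_subset ?_ ?_)
      · rcases eq_or_ne a (σ t) with rfl | ha
        · simpa using insert_subset (mem_union_right _ (bestItem_spec hL).1) subset_union_left
        · simp [ha]
      · exact (erase_subset _ _).trans subset_union_right
    · exact ih _ _ _ a
    · exact subset_union_left

/-- Items already held matter only through the capacity they use up. -/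
lemma crr_eq_union (f : ℕ) : ∀ (k : Fin n → ℕ) t L (X : Fin n → Finset α),
    (∀ a, Disjoint (X a) L) →
    crr k v σ f t L X =
      fun a => X a ∪ crr (fun b => k b - #(X b)) v σ f t L (fun _ => ∅) a := by
  induction f with
  | zero => intro k t L X _; simp [crr]
  | succ f ih =>
    intro k t L X hX
    by_cases hL : L.Nonempty
    swap
    · simp [crr, hL]
    have hg := (bestItem_spec (w := v (σ t)) hL).1
    have hXg : bestItem (v (σ t)) L ∉ X (σ t) := fun h => disjoint_left.mp (hX _) h hg
    have hdisj : ∀ Y : Fin n → Finset α, (∀ a, Y a ⊆ X a) → ∀ a,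
        Disjoint (Function.update Y (σ t) (insert (bestItem (v (σ t)) L) (Y (σ t))) a)
          (L.erase (bestItem (v (σ t)) L)) := by
      intro Y hY a
      have hYL := disjoint_of_subset_left (hY a)
        ((hX a).mono_right (erase_subset (bestItem (v (σ t)) L) L))
      rcases eq_or_ne a (σ t) with rfl | ha
      · simpa using hYL
      · simpa [ha] using hYL
    by_cases hcap : #(X (σ t)) < k (σ t)
    · have hcap' : 0 < k (σ t) - #(X (σ t)) := Nat.sub_pos_of_lt hcap
      simp only [crr, hL, hcap, hcap', card_empty, if_true]
      rw [ih k _ _ _ (hdisj X fun _ => subset_rfl),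
        ih _ _ _ _ (hdisj (fun _ => ∅) fun _ => empty_subset _)]
      have hk : (fun b => k b - #(Function.update X (σ t)
            (insert (bestItem (v (σ t)) L) (X (σ t))) b)) =
          fun b => k b - #(X b) - #(Function.update (fun _ => (∅ : Finset α)) (σ t)
            (insert (bestItem (v (σ t)) L) ∅) b) := by
        funext b
        rcases eq_or_ne b (σ t) with rfl | hb
        · simp [card_insert_of_notMem hXg, Nat.sub_sub]
        · simp [hb]
      rw [hk]
      funext a
      rcases eq_or_ne a (σ t) with rfl | ha
      · simp
      · simp [ha]
    · have hcap' : ¬ 0 < k (σ t) - #(X (σ t)) := by omega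
      simp only [crr, hL, hcap, hcap', card_empty, if_true, if_false]
      exact ih k _ L X hX

lemma crr_succ_pick (k : Fin n → ℕ) (f t : ℕ) {L : Finset α} (hL : L.Nonempty)
    (hk : 0 < k (σ t)) :
    crr k v σ (f + 1) t L (fun _ => ∅) =
      Function.update
        (crr (Function.update k (σ t) (k (σ t) - 1)) v σ f (t + 1)
          (L.erase (bestItem (v (σ t)) L)) (fun _ => ∅)) (σ t)
        (insert (bestItem (v (σ t)) L)
          (crr (Function.update k (σ t) (k (σ t) - 1)) v σ f (t + 1)
            (L.erase (bestItem (v (σ t)) L)) (fun _ => ∅) (σ t))) := by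
  have hdisj : ∀ a, Disjoint (Function.update (fun _ => (∅ : Finset α)) (σ t)
      (insert (bestItem (v (σ t)) L) ∅) a) (L.erase (bestItem (v (σ t)) L)) := by
    intro a
    rcases eq_or_ne a (σ t) with rfl | ha <;> simp [*]
  have hcap : (fun b => k b - #(Function.update (fun _ => (∅ : Finset α)) (σ t)
      (insert (bestItem (v (σ t)) L) ∅) b)) = Function.update k (σ t) (k (σ t) - 1) := by
    funext b
    rcases eq_or_ne b (σ t) with rfl | hb <;> simp [*]
  simp only [crr, hL, card_empty, hk, if_true]
  rw [crr_eq_union v σ f _ _ _ _ hdisj, hcap]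
  funext a
  rcases eq_or_ne a (σ t) with rfl | ha <;> simp [*]

lemma crr_succ_skip (k : Fin n → ℕ) (f t : ℕ) (L : Finset α) (hk : k (σ t) = 0) :
    crr k v σ (f + 1) t L (fun _ => ∅) = crr k v σ f (t + 1) L (fun _ => ∅) := by
  by_cases hL : L.Nonempty
  · simp [crr, hL, hk]
  · simp [not_nonempty_iff_eq_empty.mp hL, crr_empty_pool]

lemma card_crr_le (f : ℕ) : ∀ (k : Fin n → ℕ) t (L : Finset α) a,
    #(crr k v σ f t L (fun _ => ∅) a) ≤ k a := by
  induction f with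
  | zero => simp [crr]
  | succ f ih =>
    intro k t L a
    by_cases hL : L.Nonempty
    · rcases Nat.eq_zero_or_pos (k (σ t)) with hk | hk
      · rw [crr_succ_skip v σ k f t L hk]; exact ih k _ L a
      · rw [crr_succ_pick v σ k f t hL hk]
        have ih' := ih (Function.update k (σ t) (k (σ t) - 1)) (t + 1)
          (L.erase (bestItem (v (σ t)) L)) a
        rcases eq_or_ne a (σ t) with rfl | ha
        · simp only [Function.update_self] at ih' ⊢
          exact (card_insert_le _ _).trans (by omega)
        · simpa [ha] using ih'
    · simp [not_nonempty_iff_eq_empty.mp hL, crr_empty_pool]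

end CappedRoundRobin

lemma fin_two_add_one_add_one (i : Fin 2) : i + 1 + 1 = i := by
  fin_cases i <;> rfl

lemma fin_two_add_one_ne (i : Fin 2) : i + 1 ≠ i := by
  fin_cases i <;> decide

section AlternatingRoundRobin

variable {α : Type*} [DecidableEq α] [LinearOrder α] [Inhabited α]
  (v : Fin 2 → α → ℕ) {σ : ℕ → Fin 2}

lemma crr_succ_pick_apply (k : Fin 2 → ℕ) (f t : ℕ) {L : Finset α} (hL : L.Nonempty)
    (hk : 0 < k (σ t)) :
    let R' := crr (Function.update k (σ t) (k (σ t) - 1)) v σ f (t + 1)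
      (L.erase (bestItem (v (σ t)) L)) (fun _ => ∅)
    crr k v σ (f + 1) t L (fun _ => ∅) (σ t) = insert (bestItem (v (σ t)) L) (R' (σ t)) ∧
      crr k v σ (f + 1) t L (fun _ => ∅) (σ t + 1) = R' (σ t + 1) ∧
      bestItem (v (σ t)) L ∉ R' (σ t) := by
  refine ⟨by simp [crr_succ_pick v σ k f t hL hk],
    by simp [crr_succ_pick v σ k f t hL hk], fun h => ?_⟩
  simpa using crr_subset_union v σ _ f (t + 1) _ _ (σ t) h

/-- Whenever the mover takes an item the opponent values at least `c`, the greedy opponent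
answers with another such item, until her capacity runs out. -/
lemma crr_countAtLeast_le (hσ : ∀ t, σ (t + 1) = σ t + 1) (c f : ℕ) :
    ∀ (k : Fin 2 → ℕ) t (L : Finset α),
      countAtLeast (v (σ t + 1)) c (crr k v σ f t L (fun _ => ∅) (σ t)) +
          min (countAtLeast (v (σ t + 1)) c (crr k v σ f t L (fun _ => ∅) (σ t)) - 1)
            (k (σ t + 1)) ≤ countAtLeast (v (σ t + 1)) c L ∧
        countAtLeast (v (σ t)) c (crr k v σ f t L (fun _ => ∅) (σ t + 1)) +
          min (countAtLeast (v (σ t)) c (crr k v σ f t L (fun _ => ∅) (σ t + 1))) (k (σ t))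
            ≤ countAtLeast (v (σ t)) c L := by
  induction f with
  | zero => simp [crr, countAtLeast]
  | succ f ih =>
    intro k t L
    by_cases hL : L.Nonempty
    swap
    · simp [not_nonempty_iff_eq_empty.mp hL, crr_empty_pool, countAtLeast]
    rcases Nat.eq_zero_or_pos (k (σ t)) with hk | hk
    · have ih' := ih k (t + 1) L
      rw [hσ, fin_two_add_one_add_one] at ih'
      rw [crr_succ_skip v σ k f t L hk, hk]
      constructor <;> omega
    · obtain ⟨hRm, hRo, hg⟩ := crr_succ_pick_apply v k f t hL hk
      have ih' := ih (Function.update k (σ t) (k (σ t) - 1)) (t + 1)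
        (L.erase (bestItem (v (σ t)) L))
      rw [hσ, fin_two_add_one_add_one] at ih'
      simp only [Function.update_self, Function.update_of_ne (fin_two_add_one_ne (σ t))] at ih'
      rw [hRm, hRo, countAtLeast_insert _ _ hg]
      have hgL := (bestItem_spec (w := v (σ t)) hL)
      rw [countAtLeast_erase (v (σ t)) c hgL.1, countAtLeast_erase (v (σ t + 1)) c hgL.1]
      have hmax : ¬ c ≤ v (σ t) (bestItem (v (σ t)) L) →
          countAtLeast (v (σ t)) c L = 0 :=
        fun h => countAtLeast_eq_zero_of_isMax hgL.2 (not_le.mp h)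
      rw [countAtLeast_erase (v (σ t)) c hgL.1] at hmax
      split_ifs at hmax ⊢ <;> constructor <;> omega

/-- Each turn of the opponent removes at most one item the agent values at least `c`, and
the agent takes such an item at each of her turns while they last. -/
lemma le_crr_countAtLeast (hσ : ∀ t, σ (t + 1) = σ t + 1) (c f : ℕ) :
    ∀ (k : Fin 2 → ℕ) t (L : Finset α),
      (2 * #L ≤ f → min (k (σ t)) ((countAtLeast (v (σ t)) c L + 1) / 2) ≤
        countAtLeast (v (σ t)) c (crr k v σ f t L (fun _ => ∅) (σ t))) ∧
      (2 * #L + 1 ≤ f → min (k (σ t + 1)) (countAtLeast (v (σ t + 1)) c L / 2) ≤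
        countAtLeast (v (σ t + 1)) c (crr k v σ f t L (fun _ => ∅) (σ t + 1))) := by
  induction f with
  | zero =>
    intro k t L
    refine ⟨fun hf => ?_, by omega⟩
    simp [card_eq_zero.mp (Nat.eq_zero_of_le_zero (by omega : #L ≤ 0)), countAtLeast]
  | succ f ih =>
    intro k t L
    by_cases hL : L.Nonempty
    swap
    · simp [not_nonempty_iff_eq_empty.mp hL, crr_empty_pool, countAtLeast]
    rcases Nat.eq_zero_or_pos (k (σ t)) with hk | hk
    · have ih' := ih k (t + 1) L
      rw [hσ, fin_two_add_one_add_one] at ih'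
      rw [crr_succ_skip v σ k f t L hk, hk]
      exact ⟨fun _ => by simp, fun hf => le_trans (by omega) (ih'.1 (by omega))⟩
    · obtain ⟨hRm, hRo, hg⟩ := crr_succ_pick_apply v k f t hL hk
      have ih' := ih (Function.update k (σ t) (k (σ t) - 1)) (t + 1)
        (L.erase (bestItem (v (σ t)) L))
      rw [hσ, fin_two_add_one_add_one] at ih'
      simp only [Function.update_self, Function.update_of_ne (fin_two_add_one_ne (σ t))] at ih'
      rw [hRm, hRo, countAtLeast_insert _ _ hg]
      have hgL := (bestItem_spec (w := v (σ t)) hL)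
      have hcard : #(L.erase (bestItem (v (σ t)) L)) + 1 = #L := card_erase_add_one hgL.1
      rw [countAtLeast_erase (v (σ t)) c hgL.1, countAtLeast_erase (v (σ t + 1)) c hgL.1]
      have hmax : ¬ c ≤ v (σ t) (bestItem (v (σ t)) L) →
          countAtLeast (v (σ t)) c L = 0 :=
        fun h => countAtLeast_eq_zero_of_isMax hgL.2 (not_le.mp h)
      rw [countAtLeast_erase (v (σ t)) c hgL.1] at hmax
      refine ⟨fun hf => ?_, fun hf => ?_⟩
      · have := ih'.2 (by omega)
        split_ifs at hmax ⊢ <;> omega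
      · have := ih'.1 (by omega)
        split_ifs <;> omega

end AlternatingRoundRobin

section TwoAgentRoundRobin

variable {α : Type*} [DecidableEq α] [LinearOrder α] [Inhabited α]
  (k : Fin 2 → ℕ) (v : Fin 2 → α → ℕ) (p : Fin 2) (M : Finset α)

lemma crr2_turn_succ (t : ℕ) :
    (if (t + 1) % 2 = 0 then p else p + 1) = (if t % 2 = 0 then p else p + 1) + 1 := by
  rcases Nat.mod_two_eq_zero_or_one t with ht | ht
  · simp [ht, Nat.succ_mod_two_eq_one_iff.mpr ht]
  · simp [ht, Nat.succ_mod_two_eq_zero_iff.mpr ht, fin_two_add_one_add_one]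

lemma crr2_subset (i : Fin 2) : crr2 k v p M i ⊆ M := by
  simpa [crr2] using crr_subset_union v _ k _ 0 M (fun _ => ∅) i

lemma card_crr2_le (i : Fin 2) : #(crr2 k v p M i) ≤ k i :=
  card_crr_le v _ _ k 0 M i

lemma crr2_countAtLeast_le (c : ℕ) :
    countAtLeast (v (p + 1)) c (crr2 k v p M p) +
        min (countAtLeast (v (p + 1)) c (crr2 k v p M p) - 1) (k (p + 1)) ≤
      countAtLeast (v (p + 1)) c M ∧
    countAtLeast (v p) c (crr2 k v p M (p + 1)) +
        min (countAtLeast (v p) c (crr2 k v p M (p + 1))) (k p) ≤ countAtLeast (v p) c M :=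
  crr_countAtLeast_le v (σ := fun t => if t % 2 = 0 then p else p + 1) (crr2_turn_succ p)
    c _ k 0 M

lemma le_crr2_countAtLeast (c : ℕ) :
    min (k p) ((countAtLeast (v p) c M + 1) / 2) ≤ countAtLeast (v p) c (crr2 k v p M p) ∧
    min (k (p + 1)) (countAtLeast (v (p + 1)) c M / 2) ≤
      countAtLeast (v (p + 1)) c (crr2 k v p M (p + 1)) := by
  obtain ⟨h1, h2⟩ := le_crr_countAtLeast v (σ := fun t => if t % 2 = 0 then p else p + 1)
    (crr2_turn_succ p) c _ k 0 M
  exact ⟨h1 (by omega), h2 (by omega)⟩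

theorem feasVal_crr2_second_le_sum_first :
    feasVal (v p) (k p) (crr2 k v p M (p + 1)) ≤ (crr2 k v p M p).sum (v p) :=
  feasVal_le_sum_of_countAtLeast fun c => by
    have := (crr2_countAtLeast_le k v p M c).2
    have := (le_crr2_countAtLeast k v p M c).1
    omega

theorem exists_feasVal_crr2_first_sdiff_le :
    ∃ Y ⊆ crr2 k v p M p, #Y ≤ 1 ∧
      feasVal (v (p + 1)) (k (p + 1)) (crr2 k v p M p \ Y) ≤
        (crr2 k v p M (p + 1)).sum (v (p + 1)) := by
  obtain ⟨Y, hY, hcard, hcount⟩ := exists_countAtLeast_sdiff_eq (v (p + 1)) (crr2 k v p M p)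
  refine ⟨Y, hY, hcard, feasVal_le_sum_of_countAtLeast fun c => ?_⟩
  have := (crr2_countAtLeast_le k v p M c).1
  have := (le_crr2_countAtLeast k v p M c).2
  rw [hcount]
  omega

lemma feasVal_crr2_first_le_sum_swap :
    feasVal (v (p + 1)) (k (p + 1)) (crr2 k v p M p) ≤
      (crr2 k v (p + 1) M (p + 1)).sum (v (p + 1)) :=
  feasVal_le_sum_of_countAtLeast fun c => by
    have := (crr2_countAtLeast_le k v p M c).1
    have := (le_crr2_countAtLeast k v (p + 1) M c).1
    omega

lemma feasVal_crr2_second_le_sum_swap :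
    feasVal (v p) (k p) (crr2 k v p M (p + 1)) ≤ (crr2 k v (p + 1) M p).sum (v p) :=
  feasVal_le_sum_of_countAtLeast fun c => by
    have := (crr2_countAtLeast_le k v p M c).2
    have := (le_crr2_countAtLeast k v (p + 1) M c).2
    rw [fin_two_add_one_add_one] at this
    omega

end TwoAgentRoundRobin

section CategorySurplus

variable {α : Type*} [DecidableEq α] [LinearOrder α] [Inhabited α] {l : ℕ}
  (k : Fin 2 → Fin l → ℕ) (v : Fin 2 → α → ℕ) (C : Fin l → Finset α)

lemma catSurplus_eq_feasAdv (a : Fin 2) (h : Fin l) :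
    catSurplus k v C a h = feasAdv (v a) (k a h) (crr2 (fun i => k i h) v a (C h) a)
      (crr2 (fun i => k i h) v a (C h) (a + 1)) := by
  rw [catSurplus, feasAdv, feasVal_eq_sum (card_crr2_le (fun i => k i h) v a (C h) a)]

lemma catSurplus_nonneg (a : Fin 2) (h : Fin l) : 0 ≤ catSurplus k v C a h := by
  have := feasVal_crr2_second_le_sum_first (fun i => k i h) v a (C h)
  rw [catSurplus_eq_feasAdv, feasAdv]
  omega

/-- The surplus lemma: going second in a category costs an agent at most her first-picker
surplus there. -/
lemma neg_catSurplus_le_feasAdv (a : Fin 2) (h : Fin l) :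
    -catSurplus k v C (a + 1) h ≤ feasAdv (v (a + 1)) (k (a + 1) h)
      (crr2 (fun i => k i h) v a (C h) (a + 1)) (crr2 (fun i => k i h) v a (C h) a) := by
  have h1 := feasVal_crr2_first_le_sum_swap (fun i => k i h) v a (C h)
  have h2 := feasVal_crr2_second_le_sum_swap (fun i => k i h) v (a + 1) (C h)
  rw [fin_two_add_one_add_one] at h2
  rw [catSurplus_eq_feasAdv, fin_two_add_one_add_one, feasAdv, feasAdv]
  omega

end CategorySurplus

section PartitionMatroid

variable {α : Type*} [DecidableEq α] {l : ℕ} {C : Fin l → Finset α}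

lemma sum_eq_sum_inter (hC : ∀ h h', h ≠ h' → Disjoint (C h) (C h')) (w : α → ℕ)
    {S : Finset α} (hS : S ⊆ univ.biUnion C) : S.sum w = ∑ h, (S ∩ C h).sum w := by
  rw [← sum_biUnion, ← inter_biUnion, inter_eq_left.mpr hS]
  exact fun h _ h' _ hne => (hC h h' hne).mono inter_subset_right inter_subset_right

lemma pFeasVal_le_sum_feasVal (hC : ∀ h h', h ≠ h' → Disjoint (C h) (C h')) (w : α → ℕ)
    (kc : Fin l → ℕ) {T : Finset α} (hT : T ⊆ univ.biUnion C) :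
    pFeasVal w kc C T ≤ ∑ h, feasVal w (kc h) (T ∩ C h) := by
  refine Finset.sup_le fun _ hb => ?_
  obtain ⟨U, hU', rfl⟩ := mem_image.mp hb
  obtain ⟨hU, hcap⟩ := mem_filter.mp hU'
  rw [mem_powerset] at hU
  rw [sum_eq_sum_inter hC w (hU.trans hT)]
  exact sum_le_sum fun h _ => le_feasVal (inter_subset_inter_right hU) (hcap h)

lemma pFeasVal_le_sum_of_feasAdv (hC : ∀ h h', h ≠ h' → Disjoint (C h) (C h'))
    (w : α → ℕ) (kc : Fin l → ℕ) {S T : Finset α} (hS : S ⊆ univ.biUnion C)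
    (hT : T ⊆ univ.biUnion C) (hadv : 0 ≤ ∑ h, feasAdv w (kc h) (S ∩ C h) (T ∩ C h)) :
    pFeasVal w kc C T ≤ S.sum w := by
  simp only [feasAdv, sum_sub_distrib, sub_nonneg] at hadv
  rw [sum_eq_sum_inter hC w hS]
  exact (pFeasVal_le_sum_feasVal hC w kc hT).trans (by exact_mod_cast hadv)

end PartitionMatroid

section RoundRobinSquared

variable {α : Type*} [DecidableEq α] [LinearOrder α] [Inhabited α] {l : ℕ} [NeZero l]

lemma bestCat_spec (f : Fin l → ℤ) {rem : Finset (Fin l)} (hrem : rem.Nonempty) :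
    bestCat f rem ∈ rem ∧ ∀ h ∈ rem, f h ≤ f (bestCat f rem) := by
  obtain ⟨b, hb, hmax⟩ := exists_max_image rem f hrem
  have hne : {h ∈ rem | ∀ h' ∈ rem, f h' ≤ f h}.Nonempty :=
    ⟨b, mem_filter.mpr ⟨hb, hmax⟩⟩
  rw [bestCat, dif_pos hne]
  exact mem_filter.mp (min'_mem _ hne)

variable (k : Fin 2 → Fin l → ℕ) (v : Fin 2 → α → ℕ) (C : Fin l → Finset α)

lemma rr2run_eq_union (f : ℕ) : ∀ rem a (X : Fin 2 → Finset α) i,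
    rr2run k v C f rem a X i = X i ∪ rr2run k v C f rem a (fun _ => ∅) i := by
  induction f with
  | zero => simp [rr2run]
  | succ f ih =>
    intro rem a X i
    by_cases hrem : rem.Nonempty
    · simp only [rr2run, if_pos hrem]
      rw [ih _ _ _ i, ih _ _ (fun i => ∅ ∪ _) i]
      simp [union_assoc]
    · simp [rr2run, hrem]

lemma rr2run_subset (f : ℕ) : ∀ rem a i,
    rr2run k v C f rem a (fun _ => ∅) i ⊆ rem.biUnion C := by
  induction f with
  | zero => simp [rr2run]
  | succ f ih =>
    intro rem a i
    by_cases hrem : rem.Nonempty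
    · have hmem := (bestCat_spec (catSurplus k v C a) hrem).1
      simp only [rr2run, if_pos hrem]
      rw [rr2run_eq_union, empty_union]
      refine union_subset ((crr2_subset _ v a _ i).trans (subset_biUnion_of_mem C hmem)) ?_
      exact (ih _ _ i).trans (biUnion_subset_biUnion_of_subset_left C (erase_subset _ rem))
    · simp [rr2run, hrem]

lemma rr2run_succ_apply {f : ℕ} {rem : Finset (Fin l)} (hrem : rem.Nonempty) (a i : Fin 2) :
    rr2run k v C (f + 1) rem a (fun _ => ∅) i =
      crr2 (fun j => k j (bestCat (catSurplus k v C a) rem)) v a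
          (C (bestCat (catSurplus k v C a) rem)) i ∪
        rr2run k v C f (rem.erase (bestCat (catSurplus k v C a) rem)) (a + 1) (fun _ => ∅) i := by
  simp only [rr2run, if_pos hrem]
  rw [rr2run_eq_union, empty_union]

lemma sum_rr2run_succ (hC : ∀ h h', h ≠ h' → Disjoint (C h) (C h')) {β : Type*}
    [AddCommMonoid β] (φ : Fin l → (Fin 2 → Finset α) → β) (f : ℕ)
    {rem : Finset (Fin l)} (hrem : rem.Nonempty) (a : Fin 2) :
    ∑ h ∈ rem, φ h (fun i => rr2run k v C (f + 1) rem a (fun _ => ∅) i ∩ C h) =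
      φ (bestCat (catSurplus k v C a) rem)
          (crr2 (fun i => k i (bestCat (catSurplus k v C a) rem)) v a
            (C (bestCat (catSurplus k v C a) rem))) +
        ∑ h ∈ rem.erase (bestCat (catSurplus k v C a) rem),
          φ h (fun i => rr2run k v C f (rem.erase (bestCat (catSurplus k v C a) rem)) (a + 1)
            (fun _ => ∅) i ∩ C h) := by
  set h₀ := bestCat (catSurplus k v C a) rem
  set B := crr2 (fun i => k i h₀) v a (C h₀)
  set N := rr2run k v C f (rem.erase h₀) (a + 1) (fun _ => ∅)
  have hmem : h₀ ∈ rem := (bestCat_spec _ hrem).1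
  have hrun : ∀ i, rr2run k v C (f + 1) rem a (fun _ => ∅) i = B i ∪ N i :=
    rr2run_succ_apply k v C hrem a
  have hB : ∀ i, ∀ h ∈ rem.erase h₀, B i ∩ C h = ∅ := fun i h hh =>
    disjoint_iff_inter_eq_empty.mp <|
      (hC h₀ h (ne_of_mem_erase hh).symm).mono_left (crr2_subset _ v a _ i)
  have hN : ∀ i, N i ∩ C h₀ = ∅ := fun i =>
    disjoint_iff_inter_eq_empty.mp <| ((disjoint_biUnion_left _ _ _).mpr fun h hh =>
      hC h h₀ (ne_of_mem_erase hh)).mono_left (rr2run_subset k v C f _ _ i)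
  rw [← add_sum_erase rem _ hmem]
  congr 1
  · congr 1
    funext i
    rw [hrun, union_inter_distrib_right, hN, union_empty,
      inter_eq_left.mpr (crr2_subset _ v a _ i)]
  · refine sum_congr rfl fun h hh => ?_
    congr 1
    funext i
    rw [hrun, union_inter_distrib_right, hB i h hh, empty_union]

/-- Joint induction: the chooser's surplus on the chosen category is the largest among the
remaining ones, so it covers the loss that the second part allows on the rest of the run. -/
lemma rr2run_sum_feasAdv_bounds (hC : ∀ h h', h ≠ h' → Disjoint (C h) (C h')) (f : ℕ) :
    ∀ (rem : Finset (Fin l)) (a : Fin 2), #rem ≤ f →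
      0 ≤ ∑ h ∈ rem, feasAdv (v a) (k a h) (rr2run k v C f rem a (fun _ => ∅) a ∩ C h)
          (rr2run k v C f rem a (fun _ => ∅) (a + 1) ∩ C h) ∧
      (rem.Nonempty → -catSurplus k v C (a + 1) (bestCat (catSurplus k v C a) rem) ≤
        ∑ h ∈ rem, feasAdv (v (a + 1)) (k (a + 1) h)
          (rr2run k v C f rem a (fun _ => ∅) (a + 1) ∩ C h)
          (rr2run k v C f rem a (fun _ => ∅) a ∩ C h)) := by
  induction f with
  | zero =>
    intro rem a hrem
    simp [card_eq_zero.mp (Nat.le_zero.mp hrem)]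
  | succ f ih =>
    intro rem a hcard
    rcases rem.eq_empty_or_nonempty with rfl | hrem
    · simp
    set h₀ := bestCat (catSurplus k v C a) rem with hh₀
    have ⟨hmem, hmax⟩ := bestCat_spec (catSurplus k v C a) hrem
    obtain ⟨ih₁, ih₂⟩ := ih (rem.erase h₀) (a + 1) (by rw [card_erase_of_mem hmem]; omega)
    rw [fin_two_add_one_add_one] at ih₁ ih₂
    have e₁ := sum_rr2run_succ k v C hC
      (fun h A => feasAdv (v a) (k a h) (A a) (A (a + 1))) f hrem a
    have e₂ := sum_rr2run_succ k v C hC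
      (fun h A => feasAdv (v (a + 1)) (k (a + 1) h) (A (a + 1)) (A a)) f hrem a
    beta_reduce at e₁ e₂
    rw [← hh₀] at e₁ e₂
    rw [e₁, e₂, ← catSurplus_eq_feasAdv]
    refine ⟨?_, fun _ => ?_⟩
    · rcases (rem.erase h₀).eq_empty_or_nonempty with hre | hre
      · simpa [hre] using catSurplus_nonneg k v C a h₀
      · have := hmax _ (mem_of_mem_erase (bestCat_spec (catSurplus k v C (a + 1)) hre).1)
        linarith [ih₂ hre]
    · linarith [neg_catSurplus_le_feasAdv k v C a h₀]

theorem rr2run_ef1 (hC : ∀ h h', h ≠ h' → Disjoint (C h) (C h')) {f : ℕ}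
    {rem : Finset (Fin l)} (hrem : rem.Nonempty) (hcard : #rem ≤ f) (a : Fin 2) :
    ∃ Y ⊆ rr2run k v C f rem a (fun _ => ∅) a, #Y ≤ 1 ∧
      0 ≤ ∑ h ∈ rem, feasAdv (v (a + 1)) (k (a + 1) h)
        (rr2run k v C f rem a (fun _ => ∅) (a + 1) ∩ C h)
        ((rr2run k v C f rem a (fun _ => ∅) a \ Y) ∩ C h) := by
  obtain ⟨f, rfl⟩ : ∃ f', f = f' + 1 :=
    Nat.exists_eq_add_one.mpr (hcard.trans_lt' hrem.card_pos)
  set h₀ := bestCat (catSurplus k v C a) rem with hh₀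
  have hmem : h₀ ∈ rem := (bestCat_spec (catSurplus k v C a) hrem).1
  obtain ⟨Y, hY, hYcard, hef1⟩ :=
    exists_feasVal_crr2_first_sdiff_le (fun i => k i h₀) v a (C h₀)
  refine ⟨Y, rr2run_succ_apply k v C hrem a a ▸ hY.trans subset_union_left, hYcard, ?_⟩
  have e := sum_rr2run_succ k v C hC
    (fun h A => feasAdv (v (a + 1)) (k (a + 1) h) (A (a + 1)) (A a \ Y)) f hrem a
  beta_reduce at e
  rw [← hh₀] at e
  have hrest := (rr2run_sum_feasAdv_bounds k v C hC f (rem.erase h₀) (a + 1)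
    (by rw [card_erase_of_mem hmem]; omega)).1
  rw [fin_two_add_one_add_one] at hrest
  simp only [sdiff_inter_right_comm]
  rw [e]
  refine add_nonneg ?_ (hrest.trans (sum_le_sum fun h _ => feasAdv_anti _ sdiff_subset))
  rw [feasAdv, sub_nonneg]
  exact_mod_cast hef1

end RoundRobinSquared

theorem stmt12_general {α : Type*} [DecidableEq α] [LinearOrder α] [Inhabited α]
    {l : ℕ} [NeZero l] (C : Fin l → Finset α)
    (hCdisj : ∀ h h', h ≠ h' → Disjoint (C h) (C h'))
    (k : Fin 2 → Fin l → ℕ)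
    (v : Fin 2 → α → ℕ)
    (X : Fin 2 → Finset α)
    (hX : X = rr2run k v C l Finset.univ 0 (fun _ => ∅)) :
    (∀ i : Fin 2, ∃ Y ⊆ X (i + 1), Y.card ≤ 1 ∧
      pFeasVal (v i) (k i) C (X (i + 1) \ Y) ≤ (X i).sum (v i)) ∧
    pFeasVal (v 0) (k 0) C (X 1) ≤ (X 0).sum (v 0) := by
  subst hX
  have hsub : ∀ i, rr2run k v C l univ 0 (fun _ => ∅) i ⊆ univ.biUnion C :=
    rr2run_subset k v C l univ 0
  have hfuel : #(univ : Finset (Fin l)) ≤ l := by simp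
  have hfirst := pFeasVal_le_sum_of_feasAdv hCdisj (v 0) (k 0) (hsub 0) (hsub 1)
    (rr2run_sum_feasAdv_bounds k v C hCdisj l univ 0 hfuel).1
  obtain ⟨Y, hY, hYcard, hadv⟩ := rr2run_ef1 k v C hCdisj univ_nonempty hfuel 0
  have hsecond := pFeasVal_le_sum_of_feasAdv hCdisj (v 1) (k 1) (hsub 1)
    (sdiff_subset.trans (hsub 0)) hadv
  refine ⟨fun i => ?_, hfirst⟩
  fin_cases i
  · exact ⟨∅, empty_subset _, by simp, by simpa using hfirst⟩
  · exact ⟨Y, hY, hYcard, hsecond⟩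

/-- RR-squared produces an F-EF1 allocation for two agents with additive valuations and
partition-matroid constraints with common categories (possibly different capacities);
moreover the agent picking the first category (agent 0) has no feasible envy at all. -/
theorem stmt12 {α : Type*} [DecidableEq α] [LinearOrder α] [Inhabited α]
    {l : ℕ} [NeZero l] (M : Finset α) (C : Fin l → Finset α)
    (hCdisj : ∀ h h', h ≠ h' → Disjoint (C h) (C h'))
    (hCunion : Finset.univ.biUnion C = M)
    (k : Fin 2 → Fin l → ℕ) (hk : ∀ h, (C h).card ≤ k 0 h + k 1 h)
    (v : Fin 2 → α → ℕ)
    (X : Fin 2 → Finset α)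
    (hX : X = rr2run k v C l Finset.univ 0 (fun _ => ∅)) :
    (∀ i : Fin 2, ∃ Y ⊆ X (i + 1), Y.card ≤ 1 ∧
      pFeasVal (v i) (k i) C (X (i + 1) \ Y) ≤ (X i).sum (v i)) ∧
    pFeasVal (v 0) (k 0) C (X 1) ≤ (X 0).sum (v 0) :=
  stmt12_general C hCdisj k v X hX
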